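/- Let G = (V, E) be a cubic (3-regular) simple graph and let (S, C, H, M_G) be the associated assignment problem with couples. If the target matrix M_G is decomposable, i.e., M_G is a convex combination of deterministic assignment matrices, then G admits a proper 3-edge-coloring. -/

import Mathlib

/-! Any deterministic assignment `M'` occurring in a decomposition of `M_G` vanishes wherever
`M_G` does. In `M'` the couple of an edge `e` sits together in one hospital of `e`, say the
`χ e`-th, and fills its capacity `2`; hence the two singles of `e` of color `χ e` must go to
their vertex hospitals `(w, χ e)`. Two edges of the same color at a vertex `v` would thus
send two interns to `(v, χ e)`, whose capacity is `deg v / 3 = 1`. -/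

open Finset

/-- `(S, C, H, M)` (with `I`, `H` types of interns and hospitals) is an assignment problem
with couples: `S` is the set of single interns, `C` the set of couples (ordered pairs of
members), every intern is a single or a member of a couple, members of couples are distinct
from each other, from the singles, and from members of other couples, `M ∈ [0,1]^{I×H}`,
each row of `M` sums to `1`, and both members of a couple have identical rows. -/
def IsCouplesProblem {I H : Type*} [Fintype I] [Fintype H]
    (S : Finset I) (C : Finset (I × I)) (M : I → H → ℝ) : Prop :=
  (∀ i : I, i ∈ S ∨ ∃ c ∈ C, i = c.1 ∨ i = c.2) ∧
  (∀ c ∈ C, c.1 ∉ S ∧ c.2 ∉ S ∧ c.1 ≠ c.2) ∧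
  (∀ c ∈ C, ∀ c' ∈ C, c ≠ c' →
    c.1 ≠ c'.1 ∧ c.1 ≠ c'.2 ∧ c.2 ≠ c'.1 ∧ c.2 ≠ c'.2) ∧
  (∀ (i : I) (h : H), 0 ≤ M i h ∧ M i h ≤ 1) ∧
  (∀ i : I, ∑ h : H, M i h = 1) ∧
  (∀ c ∈ C, ∀ h : H, M c.1 h = M c.2 h)

/-- `M'` is a deterministic assignment matrix with respect to the problem with couples `C`
and target matrix `M`: its entries are in `{0,1}`, rows sum to `1`, both members of each
couple have identical rows, and each column sum equals the capacity `q_h = ∑ i, M i h`. -/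
def IsDeterministicAssignment {I H : Type*} [Fintype I] [Fintype H]
    (C : Finset (I × I)) (M M' : I → H → ℝ) : Prop :=
  (∀ (i : I) (h : H), M' i h = 0 ∨ M' i h = 1) ∧
  (∀ i : I, ∑ h : H, M' i h = 1) ∧
  (∀ c ∈ C, ∀ h : H, M' c.1 h = M' c.2 h) ∧
  (∀ h : H, ∑ i : I, M' i h = ∑ i : I, M i h)

/-- `M` is decomposable: it is a convex combination (with weights in `(0,1)`) of
deterministic assignment matrices. -/
def Decomposable {I H : Type*} [Fintype I] [Fintype H]
    (C : Finset (I × I)) (M : I → H → ℝ) : Prop :=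
  ∃ (K : ℕ) (lam : Fin K → ℝ) (Ms : Fin K → I → H → ℝ),
    (∀ k, 0 < lam k ∧ lam k < 1) ∧ (∑ k, lam k = 1) ∧
    (∀ k, IsDeterministicAssignment C M (Ms k)) ∧
    (∀ (i : I) (h : H), M i h = ∑ k, lam k * Ms k i h)


section CubicGraph

variable {V : Type*} [Fintype V] [DecidableEq V] (G : SimpleGraph V) [DecidableRel G.Adj]

/-- The edges of `G`, as a type. -/
abbrev GEdge := {e : Sym2 V // e ∈ G.edgeSet}

/-- The interns of the assignment problem associated to `G`: for each edge `e` there is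
one couple (two members, indexed by `Bool`) and six singles, indexed by a color
`i ∈ {1,2,3}` together with an endpoint `w` of `e`. -/
abbrev GIntern :=
  (GEdge G × Bool) ⊕ {p : GEdge G × Fin 3 × V // p.2.2 ∈ (p.1 : Sym2 V)}

/-- The hospitals of the assignment problem associated to `G`: for each edge `e` the three
hospitals `A(e), B(e), C(e)` (indexed by `GEdge G × Fin 3`), and for each vertex `v` and
color `i` the hospital `(v, i)`. -/
abbrev GHospital := (GEdge G × Fin 3) ⊕ (V × Fin 3)

/-- The target matrix associated to `G`: the couple of edge `e` has probability `1/3` at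
each of `A(e), B(e), C(e)`; the single of edge `e`, color `i` and endpoint `w` has
probability `2/3` at the `i`-th hospital of `e` and probability `1/3` at hospital
`(w, i)`. -/
noncomputable def GM : GIntern G → GHospital G → ℝ
  | Sum.inl (e, _), Sum.inl (e', _) => if e' = e then 1 / 3 else 0
  | Sum.inl _, Sum.inr _ => 0
  | Sum.inr p, Sum.inl (e', i') => if e' = p.1.1 ∧ i' = p.1.2.1 then 2 / 3 else 0
  | Sum.inr p, Sum.inr (v, i') => if v = p.1.2.2 ∧ i' = p.1.2.1 then 1 / 3 else 0

/-- The set of single interns of the problem associated to `G`. -/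
def GS : Finset (GIntern G) := Finset.univ.filter fun i => i.isRight

instance : DecidableEq (GIntern G × GIntern G) := instDecidableEqProd

/-- The set of couples of the problem associated to `G`: one couple per edge. -/
def GC : Finset (GIntern G × GIntern G) :=
  Finset.univ.image fun e : GEdge G => (Sum.inl (e, false), Sum.inl (e, true))

namespace IsDeterministicAssignment

variable {I H : Type*} [Fintype I] [Fintype H] {C : Finset (I × I)} {M M' : I → H → ℝ}

theorem nonneg (hM' : IsDeterministicAssignment C M M') (i : I) (h : H) : 0 ≤ M' i h := by
  rcases hM'.1 i h with h0 | h1 <;> simp [*]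

theorem exists_eq_one (hM' : IsDeterministicAssignment C M M') (i : I) : ∃ h, M' i h = 1 := by
  by_contra! hne
  have hzero : ∀ h, M' i h = 0 := fun h => (hM'.1 i h).resolve_right (hne h)
  simpa [hzero] using hM'.2.1 i

theorem card_le_capacity (hM' : IsDeterministicAssignment C M M') {h : H} {s : Finset I}
    (hs : ∀ i ∈ s, M' i h = 1) : (#s : ℝ) ≤ ∑ i, M i h := by
  calc (#s : ℝ) = ∑ i ∈ s, M' i h := by simp [sum_congr rfl hs]
    _ ≤ ∑ i, M' i h := sum_le_univ_sum_of_nonneg (hM'.nonneg · h)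
    _ = ∑ i, M i h := hM'.2.2.2 h

end IsDeterministicAssignment

theorem Decomposable.exists_isDeterministicAssignment_supported {I H : Type*}
    [Fintype I] [Fintype H] {C : Finset (I × I)} {M : I → H → ℝ} (hM : Decomposable C M) :
    ∃ M', IsDeterministicAssignment C M M' ∧ ∀ i h, M i h = 0 → M' i h = 0 := by
  obtain ⟨K, lam, Ms, hlam, hsum, hdet, hdecomp⟩ := hM
  have hK : Nonempty (Fin K) := by
    by_contra! hK
    simp at hsum
  obtain ⟨k⟩ := hK
  refine ⟨Ms k, hdet k, fun i h hzero => ?_⟩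
  have hterms := (sum_eq_zero_iff_of_nonneg fun l _ =>
    mul_nonneg (hlam l).1.le ((hdet l).nonneg i h)).1 (hdecomp i h ▸ hzero) k (mem_univ k)
  exact (mul_eq_zero.1 hterms).resolve_left (hlam k).1.ne'

theorem sum_singles_eq_sum_edge_endpoints (g : GEdge G × Fin 3 × V → ℝ) :
    ∑ p : {p : GEdge G × Fin 3 × V // p.2.2 ∈ (p.1 : Sym2 V)}, g p
      = ∑ e : GEdge G, ∑ i : Fin 3, ∑ w ∈ (e : Sym2 V).toFinset, g (e, i, w) := by
  have hendpoints (e : Sym2 V) : univ.filter (· ∈ e) = e.toFinset := by ext; simp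
  rw [← sum_subtype (univ.filter fun p : GEdge G × Fin 3 × V => p.2.2 ∈ (p.1 : Sym2 V))
    (by simp) g, sum_filter]
  simp only [Fintype.sum_prod_type]
  simp only [← sum_filter, hendpoints]

theorem sum_GM_edgeHospital (e : GEdge G) (i : Fin 3) :
    ∑ x, GM G x (.inl (e, i)) = 2 := by
  have hcard := Sym2.card_toFinset_of_not_isDiag _ (G.not_isDiag_of_mem_edgeSet e.2)
  simp only [Fintype.sum_sum_type, GM]
  rw [sum_singles_eq_sum_edge_endpoints G fun q => if e = q.1 ∧ i = q.2.1 then 2 / 3 else 0]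
  norm_num [Fintype.sum_prod_type, sum_add_distrib, ite_and, hcard]

theorem sum_ite_mem_edge (v : V) (c : ℝ) :
    ∑ e : GEdge G, (if v ∈ (e : Sym2 V) then c else 0) = G.degree v * c := by
  rw [← sum_subtype G.edgeFinset (fun _ => G.mem_edgeFinset) fun e => if v ∈ e then c else 0,
    sum_ite, ← G.incidenceFinset_eq_filter]
  simp

theorem sum_GM_vertexHospital (v : V) (i : Fin 3) :
    ∑ x, GM G x (.inr (v, i)) = G.degree v / 3 := by
  simp only [Fintype.sum_sum_type, GM]
  rw [sum_singles_eq_sum_edge_endpoints G fun q => if v = q.2.2 ∧ i = q.2.1 then 1 / 3 else 0]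
  simp [ite_and, sum_ite_eq, sum_ite_mem_edge, div_eq_mul_inv]

omit [Fintype V] [DecidableRel G.Adj] in
theorem eq_edgeHospital_of_GM_couple_ne_zero {e : GEdge G} {b : Bool} {h : GHospital G}
    (hne : GM G (.inl (e, b)) h ≠ 0) : ∃ j, h = .inl (e, j) := by
  rcases h with ⟨e', j⟩ | _
  · by_cases he : e' = e
    · exact ⟨j, by rw [he]⟩
    · simp [GM, he] at hne
  · simp [GM] at hne

omit [Fintype V] [DecidableRel G.Adj] in
theorem eq_of_GM_single_ne_zero {p : {p : GEdge G × Fin 3 × V // p.2.2 ∈ (p.1 : Sym2 V)}}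
    {h : GHospital G} (hne : GM G (.inr p) h ≠ 0) :
    h = .inl (p.1.1, p.1.2.1) ∨ h = .inr (p.1.2.2, p.1.2.1) := by
  rcases h with ⟨e', j⟩ | ⟨v, j⟩ <;> by_contra hcon <;> simp_all [GM]

section DeterministicAssignment

variable {M' : GIntern G → GHospital G → ℝ} (hM' : IsDeterministicAssignment (GC G) (GM G) M')
  (hsupp : ∀ x h, GM G x h = 0 → M' x h = 0)
include hM' hsupp

theorem exists_couple_assigned_edgeHospital (e : GEdge G) :
    ∃ j, M' (.inl (e, false)) (.inl (e, j)) = 1 := by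
  obtain ⟨h, hh⟩ := hM'.exists_eq_one (.inl (e, false))
  have hne : GM G (.inl (e, false)) h ≠ 0 := fun h0 => by simp [hsupp _ _ h0] at hh
  obtain ⟨j, rfl⟩ := eq_edgeHospital_of_GM_couple_ne_zero G hne
  exact ⟨j, hh⟩

theorem single_assigned_vertexHospital {e : GEdge G} {j : Fin 3}
    (hcouple : M' (.inl (e, false)) (.inl (e, j)) = 1) {w : V} (hw : w ∈ (e : Sym2 V)) :
    M' (.inr ⟨(e, j, w), hw⟩) (.inr (w, j)) = 1 := by
  obtain ⟨h, hh⟩ := hM'.exists_eq_one (.inr ⟨(e, j, w), hw⟩)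
  have hne : GM G (.inr ⟨(e, j, w), hw⟩) h ≠ 0 := fun h0 => by simp [hsupp _ _ h0] at hh
  rcases eq_of_GM_single_ne_zero G hne with rfl | rfl
  · have hpartner : M' (.inl (e, true)) (.inl (e, j)) = 1 :=
      (hM'.2.2.1 _ (mem_image_of_mem _ (mem_univ e)) _).symm.trans hcouple
    have hcap := hM'.card_le_capacity (h := .inl (e, j))
      (s := {.inl (e, false), .inl (e, true), .inr ⟨(e, j, w), hw⟩})
      (by simp [hcouple, hpartner, hh])
    rw [sum_GM_edgeHospital, card_insert_of_notMem (by simp), card_pair (by simp)] at hcap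
    norm_num at hcap
  · exact hh

end DeterministicAssignment

/-- if the target matrix of the assignment problem with couples
associated to a cubic simple graph `G` is decomposable, then `G` admits a proper
3-edge-coloring. -/
theorem cubic_decomposable_colorable (hreg : G.IsRegularOfDegree 3)
    (hdec : Decomposable (GC G) (GM G)) :
    ∃ χ : GEdge G → Fin 3, ∀ e e' : GEdge G, e ≠ e' →
      (∃ v : V, v ∈ (e : Sym2 V) ∧ v ∈ (e' : Sym2 V)) → χ e ≠ χ e' := by
  obtain ⟨M', hM', hsupp⟩ := hdec.exists_isDeterministicAssignment_supported
  choose χ hχ using exists_couple_assigned_edgeHospital G hM' hsupp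
  refine ⟨χ, fun e e' hne ⟨v, hv, hv'⟩ hcolor => ?_⟩
  have hcap := hM'.card_le_capacity (h := .inr (v, χ e))
    (s := {.inr ⟨(e, χ e, v), hv⟩, .inr ⟨(e', χ e', v), hv'⟩}) <| by
      simp only [mem_insert, mem_singleton, forall_eq_or_imp, forall_eq]
      exact ⟨single_assigned_vertexHospital G hM' hsupp (hχ e) hv,
        hcolor ▸ single_assigned_vertexHospital G hM' hsupp (hχ e') hv'⟩
  rw [sum_GM_vertexHospital, hreg v] at hcap
  norm_num [hne] at hcap

end CubicGraph
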